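/- arXiv:2106.09205 — 5 statements merged into one kernel-verified Lean document; each statement's English description precedes it below -/
import Mathlib

section
/- For any Hermitian matrix A of size km × km, the (k,m)-characteristic polynomial ψ_{k,m}[A](x) equals (1/(k!)^m) · ∏_{i=1}^m ∂_{z_i}^{k-1} det[Z_k − A] evaluated at z_1 = ... = z_m = x, where Z_k = diag(z,...,z) (k copies) with z = (z_1,...,z_m). -/
/-!
Expanding along the diagonal, `det (Z_k - A) = ∑_U det (-A)[U] · ∏_{(j,i) ∉ U} z_i` over all
principal minors of `-A`, and likewise `charpoly A(g) = ∑_T det (-A(g))[T] · x^(m - |T|)`, where the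
principal minors of `A(g)` are exactly the minors `(-A)[U]` with `U` contained in the graph of `g`.
So both sides are combinations `∑_U c_U(x) · det (-A)[U]`, and it suffices to compare the
coefficients. Let `c_i` be the number of points of `U` in column `i`. On the left,
`c_U = k^(-m) · #{g | U ⊆ graph g} · x^(m - |U|)`; on the right, `∏_i ∂_i^(k-1)` sends
`∏_i z_i^(k - c_i)` to `∏_i (k - c_i)(k - c_i - 1)⋯(2 - c_i) · z_i^(1 - c_i)`. Both vanish unless
every `c_i ≤ 1`, and column by column `k! · #{j | column i ⊆ {j}} = k · (k - c_i)⋯(2 - c_i)`.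
-/

open MvPolynomial Polynomial

/-- The `(k,m)`-characteristic polynomial
`ψ_{k,m}[A](x) = (1/k^m) Σ_{S ∈ P_k(m)} det[x I_m − A(S)]`.
A `k`-partition of `[m]` is encoded as a function `g : Fin m → Fin k`, the index
`i + (j-1)m` of the paper corresponding to the pair `(j,i) : Fin k × Fin m`. -/
noncomputable def psiCharPoly (k m : ℕ)
    (A : Matrix (Fin k × Fin m) (Fin k × Fin m) ℂ) : Polynomial ℂ :=
  ((k : ℂ) ^ m)⁻¹ •
    ∑ g : Fin m → Fin k,
      (A.submatrix (fun i : Fin m => (g i, i)) (fun i : Fin m => (g i, i))).charpoly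

open Finset

namespace Matrix

variable {n R : Type*} [DecidableEq n] [CommRing R]

def principalMinor (M : Matrix n n R) (U : Finset n) : R :=
  (M.submatrix ((↑) : U → n) (↑)).det

theorem principalMinor_submatrix {ι : Type*} [DecidableEq ι]
    (M : Matrix n n R) (f : ι ↪ n) (T : Finset ι) :
    (M.submatrix f f).principalMinor T = M.principalMinor (T.map f) := by
  rw [principalMinor, principalMinor, ← det_submatrix_equiv_self (T.equivMap f)]
  rfl

section Expansion

variable [Fintype n]

theorem det_add_diagonal_eq_sum_principalMinor (M : Matrix n n R) (d : n → R) :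
    (M + diagonal d).det = ∑ U : Finset n, (∏ i ∈ Uᶜ, d i) * M.principalMinor U := by
  let D := (detRowAlternating : (n → R) [⋀^n]→ₗ[R] R)
  change D (M.row + (diagonal d).row) = _
  rw [D.map_add_univ]
  refine sum_congr rfl fun U _ => ?_
  have hrows : U.piecewise M.row (diagonal d).row
      = Uᶜ.piecewise (fun i => d i • U.piecewise M.row (1 : Matrix n n R).row i)
          (U.piecewise M.row (1 : Matrix n n R).row) := by
    ext i j
    by_cases hi : i ∈ U <;> simp [hi, diagonal_apply, one_apply]
  rw [hrows]
  exact (D.toMultilinearMap.map_piecewise_smul d _ Uᶜ).trans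
    (congrArg _ (det_piecewise_one_eq_submatrix_det M U))

theorem det_diagonal_sub_map_eq_sum_principalMinor {S : Type*} [CommRing S] [Algebra R S]
    (M : Matrix n n R) (d : n → S) :
    (diagonal d - M.map (algebraMap R S)).det
      = ∑ U : Finset n, (-M).principalMinor U • ∏ i ∈ Uᶜ, d i := by
  rw [sub_eq_neg_add, ← RingHom.mapMatrix_apply, ← map_neg, RingHom.mapMatrix_apply,
    det_add_diagonal_eq_sum_principalMinor]
  refine sum_congr rfl fun U _ => ?_
  rw [principalMinor, principalMinor, Algebra.smul_def, RingHom.map_det, mul_comm]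
  rfl

theorem charpoly_eq_sum_principalMinor (M : Matrix n n R) :
    M.charpoly = ∑ U : Finset n,
      (-M).principalMinor U • Polynomial.X ^ (Fintype.card n - #U) := by
  rw [charpoly, charmatrix, scalar_apply, RingHom.mapMatrix_apply, ← Polynomial.algebraMap_eq,
    det_diagonal_sub_map_eq_sum_principalMinor]
  simp only [prod_const, card_compl]

end Expansion

theorem charpoly_submatrix_eq_sum_principalMinor {ι : Type*} [Fintype ι] [DecidableEq ι]
    (M : Matrix n n R) (f : ι ↪ n) :
    (M.submatrix f f).charpoly = ∑ U ∈ (univ.map f).powerset,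
      (-M).principalMinor U • Polynomial.X ^ (Fintype.card ι - #U) := by
  have himage : univ.map (mapEmbedding f).toEmbedding = (univ.map f).powerset := by
    ext U
    simp [subset_map_iff, eq_comm]
  rw [charpoly_eq_sum_principalMinor, ← himage, sum_map]
  refine sum_congr rfl fun T _ => ?_
  rw [RelEmbedding.coe_toEmbedding, mapEmbedding_apply, card_map, ← principalMinor_submatrix]
  rfl

end Matrix

open Matrix

section Graphs

variable {κ ι : Type*} [Fintype κ] [DecidableEq κ] [DecidableEq ι]

def graphEmbedding (g : ι → κ) : ι ↪ κ × ι :=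
  ⟨fun i => (g i, i), fun _ _ h => congrArg Prod.snd h⟩

def graphsContaining [Fintype ι] (U : Finset (κ × ι)) : Finset (ι → κ) :=
  {g | U ⊆ univ.map (graphEmbedding g)}

def column (U : Finset (κ × ι)) (i : ι) : Finset κ :=
  {j | (j, i) ∈ U}

theorem column_compl [Fintype ι] (U : Finset (κ × ι)) (i : ι) :
    column Uᶜ i = (column U i)ᶜ := by
  ext j
  simp [column]

theorem filter_snd_eq_map_column (V : Finset (κ × ι)) (i : ι) :
    {p ∈ V | p.2 = i} = (column V i).map (Function.Embedding.sectL κ i) := by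
  ext ⟨j, i'⟩
  simp only [mem_filter, column, mem_map, mem_univ, true_and, Function.Embedding.sectL_apply,
    Prod.mk.injEq]
  constructor
  · rintro ⟨h, rfl⟩
    exact ⟨j, h, rfl, rfl⟩
  · rintro ⟨_, h, rfl, rfl⟩
    exact ⟨h, rfl⟩

@[to_additive]
theorem prod_comp_snd_eq_prod_pow_card_column [Fintype ι] {M : Type*} [CommMonoid M]
    (V : Finset (κ × ι)) (f : ι → M) : ∏ p ∈ V, f p.2 = ∏ i, f i ^ #(column V i) := by
  rw [← prod_fiberwise V Prod.snd]
  refine prod_congr rfl fun i _ => ?_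
  rw [prod_congr rfl fun p hp => congrArg f (mem_filter.mp hp).2, prod_const,
    filter_snd_eq_map_column, card_map]

theorem mem_graphsContaining [Fintype ι] {U : Finset (κ × ι)} {g : ι → κ} :
    g ∈ graphsContaining U ↔ ∀ i, column U i ⊆ {g i} := by
  simp only [graphsContaining, subset_iff, column, mem_filter, mem_univ, true_and,
    mem_singleton, mem_map, graphEmbedding, Prod.ext_iff]
  constructor
  · intro h i j hj
    obtain ⟨_, rfl, rfl⟩ := h hj
    rfl
  · rintro h ⟨j, i⟩ hji
    exact ⟨i, (h i hji).symm, rfl⟩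

theorem card_graphsContaining [Fintype ι] (U : Finset (κ × ι)) :
    #(graphsContaining U) = ∏ i, #{j | column U i ⊆ {j}} := by
  rw [← Fintype.card_piFinset]
  congr 1
  ext g
  simp only [Fintype.mem_piFinset, mem_filter, mem_univ, true_and, mem_graphsContaining]

theorem sum_charpoly_submatrix_graph [Fintype ι] {R : Type*} [CommRing R]
    (M : Matrix (κ × ι) (κ × ι) R) :
    ∑ g : ι → κ, (M.submatrix (fun i => (g i, i)) (fun i => (g i, i))).charpoly
      = ∑ U, #(graphsContaining U) •
          (-M).principalMinor U • Polynomial.X ^ (Fintype.card ι - #U) := by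
  simp_rw [← sum_const]
  rw [← sum_comm' (s := univ) (t := fun g => (univ.map (graphEmbedding g)).powerset)
    (fun g U => by simp [graphsContaining])]
  exact sum_congr rfl fun g _ => charpoly_submatrix_eq_sum_principalMinor M (graphEmbedding g)

end Graphs

section Counting

open Nat

variable {ι : Type*} [DecidableEq ι]

theorem factorial_mul_card_subset_singleton {k : ℕ} (s : Finset (Fin k)) :
    k ! * #{j | s ⊆ {j}} = k * (k - #s).descFactorial (k - 1) := by
  obtain hs | hs | hs : #s = 0 ∨ #s = 1 ∨ 2 ≤ #s := by omega
  · obtain rfl := card_eq_zero.mp hs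
    rcases k with _ | k
    · rfl
    · rw [← factorial_mul_descFactorial (le_succ k)]
      simp [Nat.mul_comm]
  · obtain ⟨a, rfl⟩ := card_eq_one.mp hs
    have hfilter : ({j | ({a} : Finset (Fin k)) ⊆ {j}} : Finset (Fin k)) = {a} := by
      ext; simp [eq_comm]
    rw [hfilter, card_singleton, descFactorial_self, mul_one, mul_factorial_pred a.pos.ne']
  · have hfilter : ({j | s ⊆ {j}} : Finset (Fin k)) = ∅ :=
      filter_false_of_mem fun j _ hj => by simpa using (card_le_card hj).trans_lt' hs
    have hsk : #s ≤ k := by simpa using card_le_univ s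
    rw [hfilter, card_empty, (descFactorial_eq_zero_iff_lt).mpr (by omega)]
    simp

theorem factorial_pow_mul_card_graphsContaining {k : ℕ} [Fintype ι] (U : Finset (Fin k × ι)) :
    k ! ^ Fintype.card ι * #(graphsContaining U)
      = k ^ Fintype.card ι * ∏ i, (k - #(column U i)).descFactorial (k - 1) := by
  rw [card_graphsContaining, ← Finset.card_univ, ← prod_const, ← prod_const, ← prod_mul_distrib,
    ← prod_mul_distrib]
  exact prod_congr rfl fun i _ => factorial_mul_card_subset_singleton _

theorem card_sub_card_eq_sum_of_mem_graphsContaining {k : ℕ} (hk : 0 < k) [Fintype ι]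
    {U : Finset (Fin k × ι)} {g : ι → Fin k} (hg : g ∈ graphsContaining U) :
    Fintype.card ι - #U = ∑ i, ((k - #(column U i)) - (k - 1)) := by
  have hcol i : #(column U i) ≤ 1 :=
    (card_le_card (mem_graphsContaining.mp hg i)).trans (card_singleton _).le
  have hU : #U = ∑ i, #(column U i) := by
    rw [card_eq_sum_ones, sum_comp_snd_eq_sum_nsmul_card_column U fun _ => 1]
    simp only [smul_eq_mul, mul_one]
  rw [hU, ← Finset.card_univ, card_eq_sum_ones, ← sum_tsub_distrib _ fun i _ => hcol i]
  exact sum_congr rfl fun i _ => by omega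

end Counting

section IteratedPderiv

variable {σ R : Type*} [CommRing R]

theorem foldr_iterate_pderiv_eq_prod (l : List σ) (j : ℕ) (p : MvPolynomial σ R) :
    l.foldr (fun i p => (fun q => pderiv i q)^[j] p) p
      = (l.map fun i => (pderiv (R := R) i).toLinearMap ^ j).prod p := by
  induction l with
  | nil => rfl
  | cons i l ih =>
    rw [List.foldr_cons, ih, List.map_cons, List.prod_cons, Module.End.mul_apply,
      Module.End.pow_apply]
    rfl

theorem iterate_pderiv_monomial (i : σ) (j : ℕ) (a : σ →₀ ℕ) (c : R) :
    (pderiv i)^[j] (MvPolynomial.monomial a c)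
      = MvPolynomial.monomial (a - Finsupp.single i j) (c * (a i).descFactorial j) := by
  induction j with
  | zero => simp
  | succ j ih =>
    rw [Function.iterate_succ_apply', ih, pderiv_monomial, tsub_tsub, ← Finsupp.single_add,
      Finsupp.tsub_apply, Finsupp.single_eq_same, Nat.descFactorial_succ, Nat.cast_mul, mul_assoc,
      mul_comm (((a i).descFactorial j : ℕ) : R)]

theorem aeval_X_monomial [Fintype σ] (a : σ →₀ ℕ) (c : R) :
    aeval (fun _ : σ => (Polynomial.X : R[X])) (MvPolynomial.monomial a c)
      = Polynomial.C c * Polynomial.X ^ ∑ i, a i := by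
  rw [MvPolynomial.aeval_monomial, Finsupp.prod_fintype _ _ fun _ => pow_zero _,
    prod_pow_eq_pow_sum]
  rfl

variable [DecidableEq σ]

theorem prod_iterate_pderiv_monomial {l : List σ} (hl : l.Nodup) (j : ℕ) (a : σ →₀ ℕ) (c : R) :
    (l.map fun i => (pderiv (R := R) i).toLinearMap ^ j).prod (MvPolynomial.monomial a c)
      = MvPolynomial.monomial (a - ∑ i ∈ l.toFinset, Finsupp.single i j)
          (c * ∏ i ∈ l.toFinset, ((a i).descFactorial j : R)) := by
  induction l with
  | nil => simp
  | cons i l ih =>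
    obtain ⟨hi, hl⟩ := List.nodup_cons.mp hl
    have hi' : i ∉ l.toFinset := by simpa using hi
    have hzero : ∑ i' ∈ l.toFinset, Finsupp.single i' j i = 0 :=
      sum_eq_zero fun i' hi'' => Finsupp.single_eq_of_ne' (ne_of_mem_of_not_mem hi'' hi')
    rw [List.map_cons, List.prod_cons, Module.End.mul_apply, ih hl, Module.End.pow_apply,
      Derivation.coeFn_coe, iterate_pderiv_monomial, List.toFinset_cons, sum_insert hi',
      prod_insert hi', Finsupp.tsub_apply, Finsupp.finsetSum_apply, hzero, Nat.sub_zero,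
      tsub_tsub, add_comm (∑ i ∈ l.toFinset, _), mul_assoc, mul_comm (∏ _ ∈ _, _)]

end IteratedPderiv

theorem prod_X_snd_eq_monomial {κ ι R : Type*} [Fintype κ] [DecidableEq κ] [Fintype ι]
    [DecidableEq ι] [CommRing R] (V : Finset (κ × ι)) :
    ∏ p ∈ V, (MvPolynomial.X p.2 : MvPolynomial ι R)
      = MvPolynomial.monomial (Finsupp.equivFunOnFinite.symm fun i => #(column V i)) 1 := by
  rw [prod_comp_snd_eq_prod_pow_card_column, monomial_eq, MvPolynomial.C_1, one_mul,
    Finsupp.prod_fintype _ _ fun _ => pow_zero _]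
  rfl

theorem aeval_prod_iterate_pderiv_prod_X_snd {κ R : Type*} [Fintype κ] [DecidableEq κ]
    [CommRing R] {m : ℕ} (j : ℕ) (V : Finset (κ × Fin m)) :
    aeval (fun _ : Fin m => (Polynomial.X : R[X]))
        (((List.finRange m).map fun i => (pderiv (R := R) i).toLinearMap ^ j).prod
          (∏ p ∈ V, MvPolynomial.X p.2))
      = Polynomial.C (∏ i, ((#(column V i)).descFactorial j : R))
          * Polynomial.X ^ ∑ i, (#(column V i) - j) := by
  rw [prod_X_snd_eq_monomial, prod_iterate_pderiv_monomial (List.nodup_finRange m),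
    List.toFinset_finRange, aeval_X_monomial, one_mul]
  congr 2
  refine sum_congr rfl fun i _ => ?_
  simp [Finsupp.single_apply]

open Nat in
theorem inv_pow_smul_card_graphsContaining {K ι : Type*} [Field K] [CharZero K] [Fintype ι]
    [DecidableEq ι] {k : ℕ} (hk : 0 < k) (U : Finset (Fin k × ι)) :
    ((k : K) ^ Fintype.card ι)⁻¹ •
        (#(graphsContaining U) • (Polynomial.X : K[X]) ^ (Fintype.card ι - #U))
      = ((k ! : K) ^ Fintype.card ι)⁻¹ •
          (Polynomial.C (∏ i, ((k - #(column U i)).descFactorial (k - 1) : K))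
            * Polynomial.X ^ ∑ i, ((k - #(column U i)) - (k - 1))) := by
  have hcount := factorial_pow_mul_card_graphsContaining (ι := ι) U
  by_cases hN : #(graphsContaining U) = 0
  · have hprod : ∏ i, (k - #(column U i)).descFactorial (k - 1) = 0 := by
      simpa [hN, hk.ne'] using hcount.symm
    rw [hN, ← Nat.cast_prod, hprod]
    simp
  obtain ⟨g, hg⟩ := card_ne_zero.mp hN
  rw [card_sub_card_eq_sum_of_mem_graphsContaining hk hg, nsmul_eq_mul,
    ← map_natCast Polynomial.C, Polynomial.smul_eq_C_mul, Polynomial.smul_eq_C_mul,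
    ← mul_assoc, ← mul_assoc, ← Polynomial.C_mul, ← Polynomial.C_mul]
  have hk' : (k : K) ≠ 0 := by exact_mod_cast hk.ne'
  have hcoeff : ((k : K) ^ Fintype.card ι)⁻¹ * #(graphsContaining U)
      = ((k ! : K) ^ Fintype.card ι)⁻¹ * ∏ i, ((k - #(column U i)).descFactorial (k - 1) : K) := by
    rw [inv_mul_eq_div, inv_mul_eq_div, div_eq_div_iff (pow_ne_zero _ hk')
      (pow_ne_zero _ (by exact_mod_cast (factorial_pos k).ne'))]
    exact_mod_cast (mul_comm _ _).trans (hcount.trans (mul_comm _ _))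
  rw [hcoeff]

theorem psiCharPoly_eq_iterated_pderiv_general (k m : ℕ) (hk : 0 < k)
    (A : Matrix (Fin k × Fin m) (Fin k × Fin m) ℂ) :
    psiCharPoly k m A
      = (((Nat.factorial k : ℂ)) ^ m)⁻¹ •
          MvPolynomial.aeval (fun _ : Fin m => (Polynomial.X : Polynomial ℂ))
            ((List.finRange m).foldr
              (fun i p => (fun q => MvPolynomial.pderiv i q)^[k - 1] p)
              (Matrix.det
                (Matrix.diagonal (fun p : Fin k × Fin m =>
                    (MvPolynomial.X p.2 : MvPolynomial (Fin m) ℂ))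
                  - A.map MvPolynomial.C))) := by
  rw [psiCharPoly, sum_charpoly_submatrix_graph, ← MvPolynomial.algebraMap_eq,
    det_diagonal_sub_map_eq_sum_principalMinor, foldr_iterate_pderiv_eq_prod, map_sum, map_sum,
    smul_sum, smul_sum]
  refine sum_congr rfl fun U _ => ?_
  have hcol i : #(column Uᶜ i) = k - #(column U i) := by
    rw [column_compl, card_compl, Fintype.card_fin]
  rw [map_smul, map_smul, aeval_prod_iterate_pderiv_prod_X_snd]
  have hcoeff := inv_pow_smul_card_graphsContaining (K := ℂ) hk U
  simp only [hcol, Fintype.card_fin] at hcoeff ⊢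
  rw [smul_comm _ ((-A).principalMinor U), smul_comm _ ((-A).principalMinor U), hcoeff,
    smul_comm]

theorem psiCharPoly_eq_iterated_pderiv (k m : ℕ) (hk : 0 < k) (hm : 0 < m)
    (A : Matrix (Fin k × Fin m) (Fin k × Fin m) ℂ) (hA : A.IsHermitian) :
    psiCharPoly k m A
      = (((Nat.factorial k : ℂ)) ^ m)⁻¹ •
          MvPolynomial.aeval (fun _ : Fin m => (Polynomial.X : Polynomial ℂ))
            ((List.finRange m).foldr
              (fun i p => (fun q => MvPolynomial.pderiv i q)^[k - 1] p)
              (Matrix.det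
                (Matrix.diagonal (fun p : Fin k × Fin m =>
                    (MvPolynomial.X p.2 : MvPolynomial (Fin m) ℂ))
                  - A.map MvPolynomial.C))) :=
  psiCharPoly_eq_iterated_pderiv_general k m hk A
end

section
/- Let A ∈ ℂ^{m×m} be a positive semidefinite Hermitian matrix and let p(z_1,...,z_m) = det[diag(z_1,...,z_m) − A]. If a = (a_1,...,a_m) is above the roots of p (i.e., p(a + t) ≠ 0 for all t with nonnegative entries), then for every t ∈ [m], all roots of the univariate polynomial q(z) = p(z,...,z, a_{t+1},...,a_m) (with z in the first t slots) are nonnegative. -/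
/-!
If `q(z) = 0`, there is `v ≠ 0` with `A v = diag(z, …, z, a_{t+1}, …, a_m) v`. Since `a` is above
the roots, no `diag(a) − A + s` with `s ≥ 0` is singular, so `B = diag(a) − A` is positive definite.
Splitting `v = x + y` along the first `t` coordinates, the eigen-equation and the hermitian
symmetry of `A` give `z ‖x‖² = x*Ax + y*By ≥ 0`. Finally `x ≠ 0`, since otherwise `y*By = 0`
would force `v = 0`; hence `z ≥ 0`.
-/

open scoped ComplexOrder
open Matrix

namespace MvPolynomial

theorem eval_det_diagonal_X_sub_map_C {n R : Type*} [Fintype n] [DecidableEq n] [CommRing R]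
    (A : Matrix n n R) (c : n → R) :
    eval c (diagonal (fun i => X i) - A.map C).det = (diagonal c - A).det := by
  rw [RingHom.map_det, RingHom.mapMatrix_apply, Matrix.map_sub _ (map_sub _),
    diagonal_map (map_zero _), Matrix.map_map]
  simp [Function.comp_def]

theorem polynomial_eval_aeval {σ R : Type*} [CommRing R] (f : σ → Polynomial R) (z : R)
    (q : MvPolynomial σ R) :
    (aeval f q).eval z = eval (fun i => (f i).eval z) q := by
  simpa using comp_aeval_apply (Polynomial.aeval z) (f := f) q

end MvPolynomial

namespace Matrix

section CommRing

variable {n α : Type*} [Fintype n] [CommRing α] [StarRing α] {A : Matrix n n α}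

theorem IsHermitian.star_dotProduct_mulVec (hA : A.IsHermitian) (x y : n → α) :
    star (star x ⬝ᵥ (A *ᵥ y)) = star y ⬝ᵥ (A *ᵥ x) := by
  rw [← star_dotProduct, star_mulVec, hA.eq, dotProduct_mulVec]

theorem IsHermitian.mul_star_dotProduct_self_eq {D : Matrix n n α} (hA : A.IsHermitian)
    (hDA : (D - A).IsHermitian) {x y : n → α} {z : α} (hxy : star x ⬝ᵥ y = 0)
    (hxDy : star x ⬝ᵥ (D *ᵥ y) = 0) (h : A *ᵥ (x + y) = z • x + D *ᵥ y) :
    z * (star x ⬝ᵥ x) = star x ⬝ᵥ (A *ᵥ x) + star y ⬝ᵥ ((D - A) *ᵥ y) := by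
  have hyx : star y ⬝ᵥ x = 0 := by rw [star_dotProduct, hxy, star_zero]
  have hx : star x ⬝ᵥ (A *ᵥ x) + star x ⬝ᵥ (A *ᵥ y) = z * (star x ⬝ᵥ x) := by
    rw [← dotProduct_add, ← mulVec_add, h, dotProduct_add, dotProduct_smul, hxDy, smul_eq_mul,
      add_zero]
  have hy : star y ⬝ᵥ (A *ᵥ x) = star y ⬝ᵥ ((D - A) *ᵥ y) := by
    have := congrArg (star y ⬝ᵥ ·) h
    simp only [mulVec_add, dotProduct_add, dotProduct_smul, hyx, smul_zero, zero_add] at this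
    rw [sub_mulVec, dotProduct_sub, ← this, add_sub_cancel_right]
  have hxAy : star x ⬝ᵥ (A *ᵥ y) = star y ⬝ᵥ ((D - A) *ᵥ y) := by
    rw [← hA.star_dotProduct_mulVec, hy, hDA.star_dotProduct_mulVec]
  rw [← hx, hxAy]

end CommRing

section RCLike

variable {n 𝕜 : Type*} [Fintype n] [RCLike 𝕜]

theorem IsHermitian.posDef_of_det_add_smul_one_ne_zero [DecidableEq n] {B : Matrix n n 𝕜}
    (hB : B.IsHermitian) (h : ∀ s : ℝ, 0 ≤ s → (B + (s : 𝕜) • 1).det ≠ 0) : B.PosDef := by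
  refine hB.posDef_iff_eigenvalues_pos.mpr fun j => lt_of_not_ge fun hj => ?_
  refine h _ (neg_nonneg.mpr hj) (exists_mulVec_eq_zero_iff.mp
    ⟨_, (WithLp.ofLp_eq_zero 2).ne.2 <| hB.eigenvectorBasis.orthonormal.ne_zero j, ?_⟩)
  rw [add_mulVec, hB.mulVec_eigenvectorBasis, smul_mulVec, one_mulVec, RCLike.ofReal_neg,
    neg_smul, RCLike.real_smul_eq_coe_smul (K := 𝕜), add_neg_cancel]

theorem PosSemidef.nonneg_of_mulVec_add_eq {A D : Matrix n n 𝕜} (hA : A.PosSemidef)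
    (hB : (D - A).PosDef) {x y : n → 𝕜} {z : 𝕜} (hxy : star x ⬝ᵥ y = 0)
    (hxDy : star x ⬝ᵥ (D *ᵥ y) = 0) (h : A *ᵥ (x + y) = z • x + D *ᵥ y) (hv : x + y ≠ 0) :
    0 ≤ z := by
  have key := hA.isHermitian.mul_star_dotProduct_self_eq hB.isHermitian hxy hxDy h
  have hx : x ≠ 0 := by
    rintro rfl
    rw [zero_add] at hv
    refine (hB.dotProduct_mulVec_pos hv).ne ?_
    simpa using key
  have hxx : 0 < star x ⬝ᵥ x := dotProduct_star_self_pos_iff.mpr hx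
  have hz : z = (star x ⬝ᵥ (A *ᵥ x) + star y ⬝ᵥ ((D - A) *ᵥ y)) * (star x ⬝ᵥ x)⁻¹ := by
    rw [← key, mul_inv_cancel_right₀ hxx.ne']
  rw [hz]
  exact mul_nonneg
    (add_nonneg (hA.dotProduct_mulVec_nonneg x) (hB.posSemidef.dotProduct_mulVec_nonneg y))
    (RCLike.inv_pos_of_pos hxx).le

theorem PosSemidef.nonneg_of_det_diagonal_ite_sub_eq_zero [DecidableEq n] {A : Matrix n n 𝕜}
    (hA : A.PosSemidef) {a : n → 𝕜} (hB : (diagonal a - A).PosDef) (P : n → Prop)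
    [DecidablePred P] {z : 𝕜} (h : (diagonal (fun i => if P i then z else a i) - A).det = 0) :
    0 ≤ z := by
  obtain ⟨v, hv, hAv⟩ := exists_mulVec_eq_zero_iff.mpr h
  rw [sub_mulVec, sub_eq_zero] at hAv
  set x : n → 𝕜 := fun i => if P i then v i else 0
  set y : n → 𝕜 := fun i => if P i then 0 else v i
  have hxy : x + y = v := funext fun i => by by_cases hi : P i <;> simp [x, y, hi]
  refine hA.nonneg_of_mulVec_add_eq hB (x := x) (y := y) ?_ ?_ ?_ (hxy ▸ hv)
  · exact Finset.sum_eq_zero fun i _ => by by_cases hi : P i <;> simp [x, y, hi]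
  · exact Finset.sum_eq_zero fun i _ => by by_cases hi : P i <;> simp [x, y, hi, mulVec_diagonal]
  · rw [hxy, ← hAv]
    funext i
    by_cases hi : P i <;> simp [x, y, hi, mulVec_diagonal]

end RCLike

end Matrix

theorem roots_nonneg_of_aboveRoots_general {m : ℕ}
    (A : Matrix (Fin m) (Fin m) ℂ) (hA : A.PosSemidef)
    (p : MvPolynomial (Fin m) ℂ)
    (hp : p = Matrix.det
      (Matrix.diagonal (fun i : Fin m => (MvPolynomial.X i : MvPolynomial (Fin m) ℂ))
        - A.map MvPolynomial.C))
    (a : Fin m → ℝ)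
    (ha : ∀ s : Fin m → ℝ, (∀ i, 0 ≤ s i) →
      MvPolynomial.eval (fun i => ((a i + s i : ℝ) : ℂ)) p ≠ 0)
    (t : ℕ) :
    ∀ z : ℂ,
      Polynomial.eval z
        (MvPolynomial.aeval
          (fun i : Fin m =>
            if (i : ℕ) < t then (Polynomial.X : Polynomial ℂ)
            else Polynomial.C ((a i : ℂ))) p) = 0 →
      z.im = 0 ∧ 0 ≤ z.re := by
  intro z hz
  have eval_p (c : Fin m → ℂ) : p.eval c = (diagonal c - A).det := by
    rw [hp, MvPolynomial.eval_det_diagonal_X_sub_map_C]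
  have hB : (diagonal (fun i => (a i : ℂ)) - A).PosDef := by
    refine ((isHermitian_diagonal_of_self_adjoint _ ?_).sub hA.isHermitian)
      |>.posDef_of_det_add_smul_one_ne_zero fun s hs => ?_
    · ext i
      simp
    · convert ha (fun _ => s) (fun _ => hs) using 1
      rw [eval_p, sub_add_eq_add_sub, smul_one_eq_diagonal, diagonal_add]
      push_cast
      rfl
  rw [MvPolynomial.polynomial_eval_aeval, eval_p] at hz
  have hz_nonneg := hA.nonneg_of_det_diagonal_ite_sub_eq_zero hB (fun i : Fin m => (i : ℕ) < t)
    (by simpa [apply_ite] using hz)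
  exact ⟨(Complex.nonneg_iff.mp hz_nonneg).2.symm, (Complex.nonneg_iff.mp hz_nonneg).1⟩

/-- Let `A` be positive semidefinite, `p(z) = det[diag(z_1,…,z_m) − A]`, and let `a`
be above the roots of `p`.  Then for each `t`, all roots of
`q(z) = p(z,…,z,a_{t+1},…,a_m)` (with `z` in the first `t` slots) are nonnegative
(and real). -/
theorem roots_nonneg_of_aboveRoots {m : ℕ}
    (A : Matrix (Fin m) (Fin m) ℂ) (hA : A.PosSemidef)
    (p : MvPolynomial (Fin m) ℂ)
    (hp : p = Matrix.det
      (Matrix.diagonal (fun i : Fin m => (MvPolynomial.X i : MvPolynomial (Fin m) ℂ))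
        - A.map MvPolynomial.C))
    (a : Fin m → ℝ)
    (ha : ∀ s : Fin m → ℝ, (∀ i, 0 ≤ s i) →
      MvPolynomial.eval (fun i => ((a i + s i : ℝ) : ℂ)) p ≠ 0)
    (t : ℕ) (ht : t ≤ m) :
    ∀ z : ℂ,
      Polynomial.eval z
        (MvPolynomial.aeval
          (fun i : Fin m =>
            if (i : ℕ) < t then (Polynomial.X : Polynomial ℂ)
            else Polynomial.C ((a i : ℂ))) p) = 0 →
      z.im = 0 ∧ 0 ≤ z.re :=
  roots_nonneg_of_aboveRoots_general A hA p hp a ha t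
end

section
/- Let A ∈ ℂ^{km×km} be a positive semidefinite Hermitian matrix with 0 ⪯ A ⪯ I_{km}, and set ε := max_{1≤i≤m} Σ_{j=1}^k A(i+(j−1)m, i+(j−1)m). Let p_0(z_1,...,z_m) = det[Z_k − A], where Z_k = diag(z,...,z) with k copies of z = (z_1,...,z_m). Then for any a > 1 and any i ∈ [m], the barrier function satisfies Φ^i_{p_0}(a·1) ≤ ε/(a−1) + (k−ε)/a. -/
/-!
Restricting `p₀` to the line `a·1 + t eᵢ` gives `det (M + t Pᵢ)` with `M = a - A` and `Pᵢ` the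
diagonal projection onto the indices `(j, i)`, so by Jacobi's formula `Φⁱ(a·1) = tr (M⁻¹ Pᵢ)`,
the sum of the diagonal entries `M⁻¹ (j, i) (j, i)`. Since the spectrum of `A` lies in `[0, 1]`
and `μ ↦ (a - μ)⁻¹` is convex, the functional calculus gives
`(a - A)⁻¹ ⪯ ((a - 1)⁻¹ - a⁻¹) A + a⁻¹`; comparing diagonal entries and summing over `j`
yields the bound.
-/

open scoped ComplexOrder MatrixOrder

open Polynomial in
theorem Matrix.eval_zero_det_add_X_smul {R n : Type*} [CommRing R] [Fintype n] [DecidableEq n]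
    (M P : Matrix n n R) : (det (M.map C + (X : R[X]) • P.map C)).eval 0 = M.det := by
  rw [eval_det_add_X_smul, ← RingHom.mapMatrix_apply, ← RingHom.map_det, eval_C]

open Polynomial in
theorem Matrix.eval_zero_derivative_det_add_X_smul {R n : Type*} [CommRing R] [Fintype n]
    [DecidableEq n] (M P : Matrix n n R) (hM : IsUnit M.det) :
    (derivative (det (M.map C + (X : R[X]) • P.map C))).eval 0 = M.det * trace (M⁻¹ * P) := by
  have hfactor : M.map C + (X : R[X]) • P.map C = M.map C * (1 + (X : R[X]) • (M⁻¹ * P).map C) := by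
    rw [mul_add, mul_one, mul_smul_comm, ← Matrix.map_mul, ← Matrix.mul_assoc,
      Matrix.mul_nonsing_inv _ hM, Matrix.one_mul]
  rw [hfactor, det_mul, ← RingHom.mapMatrix_apply, ← RingHom.map_det, derivative_C_mul, eval_C_mul,
    derivative_det_one_add_X_smul]

theorem Matrix.trace_mul_diagonal_ite {R n ι : Type*} [CommRing R] [Fintype n] [DecidableEq n]
    [DecidableEq ι] (N : Matrix n n R) (D : n → ι) (i : ι) :
    trace (N * diagonal fun q => if D q = i then 1 else 0) = ∑ q with D q = i, N q q := by
  simp [trace, Finset.sum_filter]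

namespace MvPolynomial

section

variable {R σ : Type*} [CommRing R] [DecidableEq σ]

noncomputable def restrictLine (x : σ → R) (i : σ) : MvPolynomial σ R →ₐ[R] Polynomial R :=
  aeval fun j => Polynomial.C (x j) + if j = i then Polynomial.X else 0

variable (x : σ → R) (i : σ)

theorem restrictLine_X (j : σ) :
    restrictLine x i (X j) = Polynomial.C (x j) + if j = i then Polynomial.X else 0 :=
  aeval_X _ _

theorem eval_zero_restrictLine (p : MvPolynomial σ R) :
    (restrictLine x i p).eval 0 = eval x p := by
  induction p using MvPolynomial.induction_on with
  | C c => simp [restrictLine]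
  | add p q hp hq => simp [hp, hq]
  | mul_X p j hp => simp [hp, restrictLine_X, apply_ite]

theorem eval_zero_derivative_restrictLine (p : MvPolynomial σ R) :
    (Polynomial.derivative (restrictLine x i p)).eval 0 = eval x (pderiv i p) := by
  induction p using MvPolynomial.induction_on with
  | C c => simp [restrictLine]
  | add p q hp hq => simp [hp, hq]
  | mul_X p j hp =>
    rcases eq_or_ne j i with rfl | hji <;>
      simp [*, restrictLine_X, eval_zero_restrictLine, pderiv_X] <;> ring

theorem restrictLine_det_diagonal_X_sub_C {n : Type*} [Fintype n] [DecidableEq n] (D : n → σ)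
    (A : Matrix n n R) :
    restrictLine x i (Matrix.det (Matrix.diagonal (fun q => X (D q)) - A.map C)) =
      Matrix.det ((Matrix.diagonal (x ∘ D) - A).map Polynomial.C + (Polynomial.X : Polynomial R) •
        (Matrix.diagonal fun q => if D q = i then 1 else 0).map Polynomial.C) := by
  rw [AlgHom.map_det]
  congr 1
  ext q r : 1
  rcases eq_or_ne q r with rfl | hqr
  · by_cases hq : D q = i <;> simp [hq, restrictLine_X]; ring
  · simp [hqr]

end

theorem eval_pderiv_det_div_eval_det {K σ n : Type*} [Field K] [DecidableEq σ] [Fintype n]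
    [DecidableEq n] (D : n → σ) (A : Matrix n n K) (x : σ → K) (i : σ)
    (h : (Matrix.diagonal (x ∘ D) - A).det ≠ 0) :
    eval x (pderiv i (Matrix.det (Matrix.diagonal (fun q => X (D q)) - A.map C))) /
        eval x (Matrix.det (Matrix.diagonal (fun q => X (D q)) - A.map C)) =
      ∑ q with D q = i, (Matrix.diagonal (x ∘ D) - A)⁻¹ q q := by
  rw [← eval_zero_derivative_restrictLine x i, ← eval_zero_restrictLine x i,
    restrictLine_det_diagonal_X_sub_C, Matrix.eval_zero_derivative_det_add_X_smul _ _ h.isUnit,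
    Matrix.eval_zero_det_add_X_smul, mul_div_cancel_left₀ _ h, Matrix.trace_mul_diagonal_ite]

end MvPolynomial

-- The right-hand side is the chord of the convex function `μ ↦ (a - μ)⁻¹` over `[0, 1]`.
theorem inv_sub_le_of_mem_Icc {a μ : ℝ} (ha : 1 < a) (hμ : μ ∈ Set.Icc (0 : ℝ) 1) :
    (a - μ)⁻¹ ≤ ((a - 1)⁻¹ - a⁻¹) * μ + a⁻¹ := by
  obtain ⟨h0, h1⟩ := hμ
  have ha1 : a - 1 ≠ 0 := by linarith
  have ha0 : a ≠ 0 := by linarith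
  have haμ : 0 < a - μ := by linarith
  have key : ((a - 1)⁻¹ - a⁻¹) * μ + a⁻¹ - (a - μ)⁻¹ = μ * (1 - μ) / ((a - 1) * a * (a - μ)) := by
    field_simp
    ring
  have : 0 ≤ μ * (1 - μ) / ((a - 1) * a * (a - μ)) := by
    apply div_nonneg (by nlinarith)
    have : 0 < (a - 1) * a := by nlinarith
    positivity
  linarith

section Resolvent

variable {A : Type*} [Ring A] [Algebra ℝ A] {x : A} {a : ℝ}

theorem continuousOn_inv_sub_spectrum (ha : a ∉ spectrum ℝ x) :
    ContinuousOn (fun μ : ℝ => (a - μ)⁻¹) (spectrum ℝ x) :=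
  ContinuousOn.inv₀ (by fun_prop) fun μ hμ h => ha (sub_eq_zero.1 h ▸ hμ)

variable [StarRing A] [TopologicalSpace A] [ContinuousFunctionalCalculus ℝ A IsSelfAdjoint]

theorem resolvent_eq_cfc (hx : IsSelfAdjoint x) (ha : a ∉ spectrum ℝ x) :
    resolvent x a = cfc (fun μ : ℝ => (a - μ)⁻¹) x := by
  have hne : ∀ μ ∈ spectrum ℝ x, a - μ ≠ 0 := fun μ hμ h => ha (sub_eq_zero.1 h ▸ hμ)
  rw [cfc_inv (fun μ : ℝ => a - μ) x hne, cfc_sub .., cfc_const .., cfc_id' ..]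
  rfl

variable [PartialOrder A] [StarOrderedRing A] [NonnegSpectrumClass ℝ A]

theorem spectrum_subset_Icc_of_nonneg_of_le_one (h0 : 0 ≤ x) (h1 : x ≤ 1) :
    spectrum ℝ x ⊆ Set.Icc 0 1 := by
  have hx : IsSelfAdjoint x := .of_nonneg h0
  exact fun μ hμ => ⟨(algebraMap_le_iff_le_spectrum (r := (0 : ℝ))).1 (by simpa using h0) μ hμ,
    (le_algebraMap_iff_spectrum_le (r := (1 : ℝ))).1 (by simpa using h1) μ hμ⟩

theorem notMem_spectrum_of_nonneg_of_le_one (h0 : 0 ≤ x) (h1 : x ≤ 1) (ha : 1 < a) :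
    a ∉ spectrum ℝ x := fun h => by
  linarith [(spectrum_subset_Icc_of_nonneg_of_le_one h0 h1 h).2]

theorem resolvent_nonneg (h0 : 0 ≤ x) (h1 : x ≤ 1) (ha : 1 < a) : 0 ≤ resolvent x a := by
  have ha' := notMem_spectrum_of_nonneg_of_le_one h0 h1 ha
  have hcont := continuousOn_inv_sub_spectrum ha'
  rw [resolvent_eq_cfc (.of_nonneg h0) ha']
  exact cfc_nonneg fun μ hμ => inv_nonneg.2 <| by
    linarith [(spectrum_subset_Icc_of_nonneg_of_le_one h0 h1 hμ).2]

theorem resolvent_le (h0 : 0 ≤ x) (h1 : x ≤ 1) (ha : 1 < a) :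
    resolvent x a ≤ ((a - 1)⁻¹ - a⁻¹) • x + algebraMap ℝ A a⁻¹ := by
  have ha' := notMem_spectrum_of_nonneg_of_le_one h0 h1 ha
  have hcont := continuousOn_inv_sub_spectrum ha'
  have hx : IsSelfAdjoint x := .of_nonneg h0
  rw [resolvent_eq_cfc hx ha', ← cfc_const_mul_id .., ← cfc_const a⁻¹ x, ← cfc_add ..]
  exact cfc_mono fun μ hμ =>
    inv_sub_le_of_mem_Icc ha (spectrum_subset_Icc_of_nonneg_of_le_one h0 h1 hμ)

end Resolvent

namespace Matrix

variable {𝕜 n : Type*} [RCLike 𝕜] [Fintype n] [DecidableEq n] {A : Matrix n n 𝕜} {a : ℝ}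

theorem algebraMap_real_eq_smul_one (a : ℝ) : algebraMap ℝ (Matrix n n 𝕜) a = (a : 𝕜) • 1 := by
  rw [Algebra.algebraMap_eq_smul_one, RCLike.real_smul_eq_coe_smul (K := 𝕜)]

theorem resolvent_eq_inv_smul_one_sub (A : Matrix n n 𝕜) (a : ℝ) :
    resolvent A a = ((a : 𝕜) • 1 - A)⁻¹ := by
  rw [resolvent, nonsing_inv_eq_ringInverse, algebraMap_real_eq_smul_one]

variable (hA : A.PosSemidef) (hAI : (1 - A).PosSemidef) (ha : 1 < a)
include hA hAI ha

theorem isUnit_det_smul_one_sub : IsUnit ((a : 𝕜) • 1 - A).det := by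
  rw [← isUnit_iff_isUnit_det, ← algebraMap_real_eq_smul_one, ← spectrum.notMem_iff]
  exact notMem_spectrum_of_nonneg_of_le_one (nonneg_iff_posSemidef.2 hA) (le_iff.2 hAI) ha

theorem inv_smul_one_sub_apply_self_nonneg (q : n) : 0 ≤ ((a : 𝕜) • 1 - A)⁻¹ q q := by
  rw [← resolvent_eq_inv_smul_one_sub]
  exact (nonneg_iff_posSemidef.1 <|
    resolvent_nonneg (nonneg_iff_posSemidef.2 hA) (le_iff.2 hAI) ha).diag_nonneg

theorem re_inv_smul_one_sub_apply_self_le (q : n) :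
    RCLike.re (((a : 𝕜) • 1 - A)⁻¹ q q) ≤ ((a - 1)⁻¹ - a⁻¹) * RCLike.re (A q q) + a⁻¹ := by
  have := (RCLike.nonneg_iff.1 <| (le_iff.1 <|
    resolvent_le (nonneg_iff_posSemidef.2 hA) (le_iff.2 hAI) ha).diag_nonneg (i := q)).1
  rw [resolvent_eq_inv_smul_one_sub] at this
  simp only [sub_apply, add_apply, smul_apply, algebraMap_matrix_apply, if_true, map_sub,
    map_add, RCLike.smul_re, RCLike.algebraMap_eq_ofReal, RCLike.ofReal_re, sub_nonneg] at this
  exact this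

end Matrix

theorem barrier_bound_general {k m : ℕ}
    (A : Matrix (Fin k × Fin m) (Fin k × Fin m) ℂ)
    (hA : A.PosSemidef) (hAI : (1 - A).PosSemidef)
    (ε : ℝ) (hε : ∀ i : Fin m, ∑ j : Fin k, (A (j, i) (j, i)).re ≤ ε)
    (p₀ : MvPolynomial (Fin m) ℂ)
    (hp₀ : p₀ = Matrix.det
      (Matrix.diagonal (fun q : Fin k × Fin m => (MvPolynomial.X q.2 : MvPolynomial (Fin m) ℂ))
        - A.map MvPolynomial.C))
    (a : ℝ) (ha : 1 < a) (i : Fin m) :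
    (MvPolynomial.eval (fun _ : Fin m => (a : ℂ)) (MvPolynomial.pderiv i p₀)
        / MvPolynomial.eval (fun _ : Fin m => (a : ℂ)) p₀).im = 0 ∧
    (MvPolynomial.eval (fun _ : Fin m => (a : ℂ)) (MvPolynomial.pderiv i p₀)
        / MvPolynomial.eval (fun _ : Fin m => (a : ℂ)) p₀).re
      ≤ ε / (a - 1) + ((k : ℝ) - ε) / a := by
  have hM : Matrix.diagonal ((fun _ : Fin m => (a : ℂ)) ∘ Prod.snd) - A = (a : ℂ) • 1 - A := by
    rw [Matrix.smul_one_eq_diagonal]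
    rfl
  have hΦ : MvPolynomial.eval (fun _ : Fin m => (a : ℂ)) (MvPolynomial.pderiv i p₀)
        / MvPolynomial.eval (fun _ : Fin m => (a : ℂ)) p₀ =
      ∑ j : Fin k, ((a : ℂ) • 1 - A)⁻¹ (j, i) (j, i) := by
    rw [hp₀, MvPolynomial.eval_pderiv_det_div_eval_det Prod.snd A _ i
      (hM ▸ Matrix.isUnit_det_smul_one_sub hA hAI ha).ne_zero, hM, Finset.sum_filter,
      Fintype.sum_prod_type]
    simp
  rw [hΦ]
  refine ⟨(Complex.nonneg_iff.1 <| Finset.sum_nonneg fun j _ =>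
    Matrix.inv_smul_one_sub_apply_self_nonneg hA hAI ha _).2.symm, ?_⟩
  have hslope : 0 ≤ (a - 1)⁻¹ - a⁻¹ := sub_nonneg.2 (inv_anti₀ (by linarith) (by linarith))
  calc (∑ j, ((a : ℂ) • 1 - A)⁻¹ (j, i) (j, i)).re
        = ∑ j, (((a : ℂ) • 1 - A)⁻¹ (j, i) (j, i)).re := Complex.re_sum _ _
    _ ≤ ∑ j, (((a - 1)⁻¹ - a⁻¹) * (A (j, i) (j, i)).re + a⁻¹) :=
      Finset.sum_le_sum fun j _ => Matrix.re_inv_smul_one_sub_apply_self_le hA hAI ha _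
    _ = ((a - 1)⁻¹ - a⁻¹) * ∑ j, (A (j, i) (j, i)).re + k * a⁻¹ := by
      rw [Finset.sum_add_distrib, ← Finset.mul_sum]
      simp
    _ ≤ ((a - 1)⁻¹ - a⁻¹) * ε + k * a⁻¹ := by gcongr; exact hε i
    _ = ε / (a - 1) + ((k : ℝ) - ε) / a := by ring

/-- Barrier function bound: for `0 ⪯ A ⪯ I_{km}` with
`Σ_j A(i+(j−1)m, i+(j−1)m) ≤ ε` for all `i`, and `p_0(z) = det[Z_k − A]`, one has
`Φ^i_{p_0}(a·1) ≤ ε/(a−1) + (k−ε)/a` for all `a > 1` and `i ∈ [m]`.  The index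
`i+(j−1)m` of the paper corresponds to the pair `(j,i) : Fin k × Fin m`. -/
theorem barrier_bound {k m : ℕ} (hk : 0 < k) (hm : 0 < m)
    (A : Matrix (Fin k × Fin m) (Fin k × Fin m) ℂ)
    (hA : A.PosSemidef) (hAI : (1 - A).PosSemidef)
    (ε : ℝ) (hε : ∀ i : Fin m, ∑ j : Fin k, (A (j, i) (j, i)).re ≤ ε)
    (p₀ : MvPolynomial (Fin m) ℂ)
    (hp₀ : p₀ = Matrix.det
      (Matrix.diagonal (fun q : Fin k × Fin m => (MvPolynomial.X q.2 : MvPolynomial (Fin m) ℂ))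
        - A.map MvPolynomial.C))
    (a : ℝ) (ha : 1 < a) (i : Fin m) :
    (MvPolynomial.eval (fun _ : Fin m => (a : ℂ)) (MvPolynomial.pderiv i p₀)
        / MvPolynomial.eval (fun _ : Fin m => (a : ℂ)) p₀).im = 0 ∧
    (MvPolynomial.eval (fun _ : Fin m => (a : ℂ)) (MvPolynomial.pderiv i p₀)
        / MvPolynomial.eval (fun _ : Fin m => (a : ℂ)) p₀).re
      ≤ ε / (a - 1) + ((k : ℝ) - ε) / a :=
  barrier_bound_general A hA hAI ε hε p₀ hp₀ a ha i
end

section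
/- The mixed characteristic polynomial is affine-linear in each argument: for Hermitian matrices X_1,...,X_m, X_i' ∈ ℂ^{d×d} and any α ∈ ℝ, μ[X_1,...,(1−α)X_i + αX_i',...,X_m](x) = (1−α)·μ[X_1,...,X_i,...,X_m](x) + α·μ[X_1,...,X_i',...,X_m](x). -/
/-!
Write `P = det (x I + Σ_j z_j X_j)` and `L p = ((1 - ∂_1) ⋯ (1 - ∂_m) p)(0)`, so that `μ[X] = L P`.
Replacing `X_i` by `u X_i + v X_i'` with `u + v = 1` only changes the coefficient of `z_i`, and
`det (A + z_i B)` is an affine function of `B` modulo `z_i ^ 2`: every term of the Leibniz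
expansion is a product of factors `a + z_i b`. Hence the three determinants satisfy
`P_mix ≡ u P + v P' (mod z_i ^ 2)`. The linear map `L` kills `z_i ^ 2 q`: the `∂_j` with `j ≠ i`
preserve divisibility by a power of `z_i`, the factor `1 - ∂_i` turns `z_i ^ 2 ∣ p` into
`z_i ∣ p`, and evaluation at `0` kills multiples of `z_i`.
-/

open Polynomial

/-- The mixed characteristic polynomial
`μ[X_1,…,X_m](x) = ∏_{i=1}^m (1 − ∂_{z_i}) det[x I_d + Σ_i z_i X_i] |_{z=0}`,
computed in `(ℂ[x])[z_1,…,z_m]`. -/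
noncomputable def mixedCharPoly {m d : ℕ}
    (X : Fin m → Matrix (Fin d) (Fin d) ℂ) : Polynomial ℂ :=
  MvPolynomial.eval (fun _ : Fin m => (0 : Polynomial ℂ)) <|
    (List.finRange m).foldr (fun i p => p - MvPolynomial.pderiv i p)
      (Matrix.det
        (Matrix.diagonal (fun _ : Fin d =>
            (MvPolynomial.C (Polynomial.X : Polynomial ℂ) :
              MvPolynomial (Fin m) (Polynomial ℂ)))
          + ∑ i : Fin m,
              (MvPolynomial.X i : MvPolynomial (Fin m) (Polynomial ℂ)) •
                (X i).map (fun c => MvPolynomial.C (Polynomial.C c))))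

section FirstOrder

variable {S : Type*} [CommRing S]

theorem dvd_prod_add_mul_sub_prod_add_mul {ι : Type*} (s : Finset ι) (a b c : ι → S) (t : S) :
    t ∣ ∏ k ∈ s, (a k + t * b k) - ∏ k ∈ s, (a k + t * c k) := by
  have ht : Ideal.Quotient.mk (Ideal.span {t}) t = 0 :=
    Ideal.Quotient.eq_zero_iff_mem.mpr (Ideal.mem_span_singleton_self t)
  rw [← Ideal.mem_span_singleton, ← Ideal.Quotient.eq]
  simp [map_prod, ht]

theorem sq_dvd_prod_add_mul_sub_of_add_eq_one {ι : Type*} [DecidableEq ι] (s : Finset ι)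
    (a b c : ι → S) {t u v : S} (huv : u + v = 1) :
    t ^ 2 ∣ ∏ k ∈ s, (a k + t * (u * b k + v * c k))
      - (u * ∏ k ∈ s, (a k + t * b k) + v * ∏ k ∈ s, (a k + t * c k)) := by
  induction s using Finset.induction_on with
  | empty => simp [huv]
  | @insert j s hj ih =>
    obtain ⟨q, hq⟩ := ih
    obtain ⟨r, hr⟩ := dvd_prod_add_mul_sub_prod_add_mul s a c b t
    simp only [Finset.prod_insert hj]
    -- the error grows by `t u v (b j - c j) (∏ (a + t c) - ∏ (a + t b))`, a multiple of `t ^ 2`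
    refine ⟨(a j + t * (u * b j + v * c j)) * q + u * v * (b j - c j) * r, ?_⟩
    linear_combination (a j + t * (u * b j + v * c j)) * hq + t * u * v * (b j - c j) * hr
      + t * (u * b j * ∏ k ∈ s, (a k + t * c k) + v * c j * ∏ k ∈ s, (a k + t * b k)
        + (∏ k ∈ s, (a k + t * b k) - ∏ k ∈ s, (a k + t * c k)) * (u * b j - v * c j)) * huv

theorem sq_dvd_det_add_smul_sub_of_add_eq_one {n : Type*} [DecidableEq n] [Fintype n]
    (A B B' : Matrix n n S) {t u v : S} (huv : u + v = 1) :
    t ^ 2 ∣ (A + t • (u • B + v • B')).det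
      - (u * (A + t • B).det + v * (A + t • B').det) := by
  simp only [Matrix.det_apply, Finset.mul_sum, ← Finset.sum_add_distrib, ← Finset.sum_sub_distrib]
  refine Finset.dvd_sum fun τ _ => ?_
  simp only [Units.smul_def, zsmul_eq_mul, Matrix.add_apply, Matrix.smul_apply, smul_eq_mul,
    mul_left_comm u, mul_left_comm v, ← mul_add, ← mul_sub]
  exact (sq_dvd_prod_add_mul_sub_of_add_eq_one _ _ _ _ huv).mul_left _

end FirstOrder

namespace MvPolynomial

variable {σ S : Type*} [CommRing S]

noncomputable def oneSubPDerivProd (l : List σ) : Module.End S (MvPolynomial σ S) :=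
  (l.map fun i => 1 - (pderiv i).toLinearMap).prod

theorem oneSubPDerivProd_cons (i : σ) (l : List σ) (p : MvPolynomial σ S) :
    oneSubPDerivProd (i :: l) p = oneSubPDerivProd l p - pderiv i (oneSubPDerivProd l p) := rfl

theorem oneSubPDerivProd_append (l₁ l₂ : List σ) (p : MvPolynomial σ S) :
    oneSubPDerivProd (l₁ ++ l₂) p = oneSubPDerivProd l₁ (oneSubPDerivProd l₂ p) := by
  simp [oneSubPDerivProd]

theorem foldr_sub_pderiv (l : List σ) (p : MvPolynomial σ S) :
    l.foldr (fun i q => q - pderiv i q) p = oneSubPDerivProd l p := by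
  induction l with
  | nil => rfl
  | cons i l ih => rw [List.foldr_cons, ih, oneSubPDerivProd_cons]

theorem X_pow_dvd_pderiv_of_ne {i j : σ} (hij : i ≠ j) {k : ℕ} {p : MvPolynomial σ S}
    (h : X i ^ k ∣ p) : X i ^ k ∣ pderiv j p := by
  obtain ⟨r, rfl⟩ := h
  simp [Derivation.leibniz_pow, pderiv_X_of_ne hij]

theorem X_pow_dvd_oneSubPDerivProd {i : σ} {l : List σ} (hl : i ∉ l) {k : ℕ}
    {p : MvPolynomial σ S} (h : X i ^ k ∣ p) : X i ^ k ∣ oneSubPDerivProd l p := by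
  induction l with
  | nil => exact h
  | cons j l ih =>
    obtain ⟨hij, hl⟩ := List.ne_and_not_mem_of_not_mem_cons hl
    rw [oneSubPDerivProd_cons]
    exact dvd_sub (ih hl) (X_pow_dvd_pderiv_of_ne hij (ih hl))

theorem X_dvd_sub_pderiv_of_X_sq_dvd {i : σ} {p : MvPolynomial σ S} (h : X i ^ 2 ∣ p) :
    X i ∣ p - pderiv i p := by
  obtain ⟨r, rfl⟩ := h
  refine ⟨X i * r - 2 * r - X i * pderiv i r, ?_⟩
  simp only [Derivation.leibniz, Derivation.leibniz_pow, pderiv_X_self, smul_eq_mul]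
  ring

theorem constantCoeff_oneSubPDerivProd_of_X_sq_dvd {i : σ} {l : List σ} (hl : l.Nodup)
    (hi : i ∈ l) {p : MvPolynomial σ S} (h : X i ^ 2 ∣ p) :
    constantCoeff (oneSubPDerivProd l p) = 0 := by
  obtain ⟨l₁, l₂, rfl⟩ := List.append_of_mem hi
  obtain ⟨hi₁, hi₂⟩ : i ∉ l₁ ∧ i ∉ l₂ := by
    simpa [not_or] using (List.nodup_cons.mp (List.nodup_middle.mp hl)).1
  have h₂ : X i ∣ oneSubPDerivProd (i :: l₂) p :=
    X_dvd_sub_pderiv_of_X_sq_dvd (X_pow_dvd_oneSubPDerivProd hi₂ h)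
  obtain ⟨r, hr⟩ := X_pow_dvd_oneSubPDerivProd hi₁ (k := 1) (by simpa using h₂)
  rw [oneSubPDerivProd_append, hr]
  simp

end MvPolynomial

section MixedCharMatrix

noncomputable def mixedCharMatrix {ι n R : Type*} [Fintype ι] [DecidableEq n] [CommRing R]
    (X : ι → Matrix n n R) : Matrix n n (MvPolynomial ι R[X]) :=
  Matrix.diagonal (fun _ => MvPolynomial.C Polynomial.X)
    + ∑ j, (MvPolynomial.X j : MvPolynomial ι R[X]) • (X j).map (algebraMap R _)

variable {ι n R : Type*} [Fintype ι] [DecidableEq ι] [DecidableEq n] [CommRing R]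

theorem mixedCharMatrix_update (X : ι → Matrix n n R) (i : ι) (Y : Matrix n n R) :
    mixedCharMatrix (Function.update X i Y) = mixedCharMatrix (Function.update X i 0)
      + (MvPolynomial.X i : MvPolynomial ι R[X]) • Y.map (algebraMap R _) := by
  rw [← sub_eq_iff_eq_add', mixedCharMatrix, mixedCharMatrix, add_sub_add_left_eq_sub,
    ← Finset.sum_sub_distrib, Finset.sum_eq_single i (fun j _ hj => by simp [hj]) (by simp)]
  simp

theorem sq_dvd_det_mixedCharMatrix_update_sub [Fintype n] (X : ι → Matrix n n R) (i : ι)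
    (X' : Matrix n n R) {u v : R} (huv : u + v = 1) :
    (MvPolynomial.X i : MvPolynomial ι R[X]) ^ 2
      ∣ (mixedCharMatrix (Function.update X i (u • X i + v • X'))).det
        - (u • (mixedCharMatrix X).det + v • (mixedCharMatrix (Function.update X i X')).det) := by
  have hX : mixedCharMatrix X = mixedCharMatrix (Function.update X i 0)
      + (MvPolynomial.X i : MvPolynomial ι R[X]) • (X i).map (algebraMap R _) := by
    simpa using mixedCharMatrix_update X i (X i)
  have hmap : (u • X i + v • X').map (algebraMap R (MvPolynomial ι R[X]))
      = algebraMap R (MvPolynomial ι R[X]) u • (X i).map (algebraMap R _)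
        + algebraMap R (MvPolynomial ι R[X]) v • X'.map (algebraMap R _) := by
    ext
    simp only [Matrix.map_apply, Matrix.add_apply, Matrix.smul_apply, smul_eq_mul, map_add,
      map_mul]
  rw [mixedCharMatrix_update X i (u • X i + v • X'), mixedCharMatrix_update X i X', hX, hmap,
    Algebra.smul_def u, Algebra.smul_def v]
  exact sq_dvd_det_add_smul_sub_of_add_eq_one _ _ _ (by rw [← map_add, huv, map_one])

end MixedCharMatrix

theorem mixedCharPoly_eq_constantCoeff {m d : ℕ} (X : Fin m → Matrix (Fin d) (Fin d) ℂ) :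
    mixedCharPoly X = MvPolynomial.constantCoeff
      (MvPolynomial.oneSubPDerivProd (List.finRange m) (mixedCharMatrix X).det) := by
  rw [← MvPolynomial.foldr_sub_pderiv, ← MvPolynomial.eval_zero]
  rfl

theorem mixedCharPoly_affine_general {m d : ℕ}
    (X : Fin m → Matrix (Fin d) (Fin d) ℂ)
    (i : Fin m) (X' : Matrix (Fin d) (Fin d) ℂ)
    (α : ℝ) :
    mixedCharPoly (Function.update X i (((1 - α : ℝ) : ℂ) • X i + ((α : ℝ) : ℂ) • X'))
      = ((1 - α : ℝ) : ℂ) • mixedCharPoly X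
        + ((α : ℝ) : ℂ) • mixedCharPoly (Function.update X i X') := by
  obtain ⟨q, hq⟩ := sq_dvd_det_mixedCharMatrix_update_sub X i X'
    (u := ((1 - α : ℝ) : ℂ)) (v := ((α : ℝ) : ℂ)) (by push_cast; ring)
  have hvanish := MvPolynomial.constantCoeff_oneSubPDerivProd_of_X_sq_dvd (List.nodup_finRange m)
    (List.mem_finRange i) (dvd_mul_right (MvPolynomial.X i ^ 2) q)
  rw [sub_eq_iff_eq_add'] at hq
  simp only [mixedCharPoly_eq_constantCoeff, hq, map_add, hvanish, add_zero,
    LinearMap.map_smul_of_tower, MvPolynomial.constantCoeff_smul]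

/-- The mixed characteristic polynomial is affine-linear in each argument. -/
theorem mixedCharPoly_affine {m d : ℕ}
    (X : Fin m → Matrix (Fin d) (Fin d) ℂ) (hX : ∀ i, (X i).IsHermitian)
    (i : Fin m) (X' : Matrix (Fin d) (Fin d) ℂ) (hX' : X'.IsHermitian)
    (α : ℝ) :
    mixedCharPoly (Function.update X i (((1 - α : ℝ) : ℂ) • X i + ((α : ℝ) : ℂ) • X'))
      = ((1 - α : ℝ) : ℂ) • mixedCharPoly X
        + ((α : ℝ) : ℂ) • mixedCharPoly (Function.update X i X') :=
  mixedCharPoly_affine_general X i X' α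
end

section
/- For a rank-one positive semidefinite matrix λ·vv* ∈ ℂ^{km×km} with λ ≥ 0 and v a unit vector, the (k,m)-characteristic polynomial is ψ_{k,m}[λ·vv*](x) = x^{m−1}(x − λ/k); in particular its largest root is λ/k. -/
/-!
Every principal submatrix of a rank-one matrix `u wᵀ` is again rank one, so its characteristic
polynomial is `X ^ m - tr · X ^ (m - 1)`. Averaging over the `k ^ m` partitions, each diagonal
entry of the `km × km` matrix lies in exactly `k ^ (m - 1)` of the submatrices, so the averaged
trace is `(u ⬝ᵥ w) / k`, which is `λ / k` for `λ·vv*` with `‖v‖ = 1`.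
-/

open Polynomial

/-- The largest (real) root of a real-rooted polynomial over `ℂ`. -/
noncomputable def maxRoot (p : Polynomial ℂ) : ℝ :=
  sSup {x : ℝ | p.eval (x : ℂ) = 0}

theorem Matrix.submatrix_vecMulVec {l m n o α : Type*} [Mul α] (u : m → α) (w : n → α)
    (f : l → m) (g : o → n) :
    (vecMulVec u w).submatrix f g = vecMulVec (u ∘ f) (w ∘ g) :=
  rfl

theorem Fintype.sum_pi_sum_apply {ι κ α : Type*} [Fintype ι] [DecidableEq ι] [Fintype κ]
    [AddCommMonoid α] (f : ι → κ → α) :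
    ∑ g : ι → κ, ∑ i, f i (g i) = card κ ^ (card ι - 1) • ∑ i, ∑ a, f i a := by
  rw [Finset.sum_comm, Finset.smul_sum]
  refine Finset.sum_congr rfl fun i _ => ?_
  simpa only [Fintype.piFinset_univ, Finset.card_univ] using
    Fintype.sum_piFinset_apply (f i) Finset.univ i

theorem sum_dotProduct_comp_graph {ι κ R : Type*} [Fintype ι] [DecidableEq ι] [Fintype κ]
    [NonUnitalNonAssocSemiring R] (u w : κ × ι → R) :
    ∑ g : ι → κ, (u ∘ fun i => (g i, i)) ⬝ᵥ (w ∘ fun i => (g i, i))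
      = Fintype.card κ ^ (Fintype.card ι - 1) • (u ⬝ᵥ w) := by
  simp only [dotProduct, Function.comp_apply, Fintype.sum_prod_type_right]
  exact Fintype.sum_pi_sum_apply fun i a => u (a, i) * w (a, i)

theorem psiCharPoly_vecMulVec {k : ℕ} (hk : k ≠ 0) (m : ℕ) (u w : Fin k × Fin m → ℂ) :
    psiCharPoly k m (Matrix.vecMulVec u w) = X ^ m - (u ⬝ᵥ w / k) • X ^ (m - 1) := by
  have hk' : (k : ℂ) ≠ 0 := Nat.cast_ne_zero.mpr hk
  simp only [psiCharPoly, Matrix.submatrix_vecMulVec, Matrix.charpoly_vecMulVec, Fintype.card_fin]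
  rw [Finset.sum_sub_distrib, ← Finset.sum_smul, sum_dotProduct_comp_graph, Finset.sum_const,
    Finset.card_univ, Fintype.card_fun, Fintype.card_fin, Fintype.card_fin]
  rcases m with _ | n
  · simp
  · simp only [← Nat.cast_smul_eq_nsmul ℂ, smul_sub, smul_smul, Nat.add_sub_cancel, smul_eq_mul]
    congr 2
    · rw [Nat.cast_pow, inv_mul_cancel₀ (pow_ne_zero _ hk'), one_smul]
    · rw [Nat.cast_pow, pow_succ]
      field_simp

theorem maxRoot_X_pow_mul_X_sub_C (n : ℕ) {r : ℝ} (hr : 0 ≤ r) :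
    maxRoot (X ^ n * (X - C (r : ℂ))) = r := by
  refine IsGreatest.csSup_eq ⟨by simp, fun x hx => ?_⟩
  simp only [Set.mem_ofPred_eq, eval_mul, eval_pow, eval_X, eval_sub, eval_C, mul_eq_zero,
    pow_eq_zero_iff', Complex.ofReal_eq_zero, sub_eq_zero, Complex.ofReal_inj] at hx
  rcases hx with ⟨rfl, -⟩ | rfl
  · exact hr
  · exact le_rfl

/-- For a rank-one PSD matrix `λ·vv*` with `λ ≥ 0` and `v` a unit vector,
`ψ_{k,m}[λ·vv*](x) = x^{m−1}(x − λ/k)`; in particular the largest root is `λ/k`. -/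
theorem psiCharPoly_rankOne (k m : ℕ) (hk : 0 < k) (hm : 0 < m)
    (lam : ℝ) (hlam : 0 ≤ lam)
    (v : Fin k × Fin m → ℂ)
    (hv : dotProduct (star v) v = 1) :
    psiCharPoly k m ((lam : ℂ) • Matrix.vecMulVec v (star v))
        = Polynomial.X ^ (m - 1) * (Polynomial.X - Polynomial.C ((lam : ℂ) / k)) ∧
      maxRoot (psiCharPoly k m ((lam : ℂ) • Matrix.vecMulVec v (star v)))
        = lam / k := by
  have hpoly : psiCharPoly k m ((lam : ℂ) • Matrix.vecMulVec v (star v))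
      = X ^ (m - 1) * (X - C ((lam : ℂ) / k)) := by
    rw [← Matrix.smul_vecMulVec, psiCharPoly_vecMulVec hk.ne', smul_dotProduct,
      dotProduct_comm v, hv, smul_eq_mul, mul_one, smul_eq_C_mul, mul_sub, ← pow_succ,
      Nat.sub_add_cancel hm, mul_comm (X ^ (m - 1))]
  refine ⟨hpoly, ?_⟩
  rw [hpoly, show (lam : ℂ) / k = ((lam / k : ℝ) : ℂ) by push_cast; rfl]
  exact maxRoot_X_pow_mul_X_sub_C _ (by positivity)
end
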